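/- Let ω be an E-reduced quadratic irrational with minimal T_E-period n and ECF digits (a₁,e₁),…,(aₙ,eₙ), and let Ω_E(ω) = M(a₁,e₁)···M(aₙ,eₙ). Let σ = (a,b;c,d) ∈ Θ̃ satisfy σ·ω = ω. (i) If c ≥ d ≥ 1, then eₙ = +1 and σ = Ω_E(ω)^k for some integer k ≥ 1. (ii) If c ≥ −d ≥ 1, then eₙ = −1 and σ = Ω_E(ω)^k for some integer k ≥ 1. -/

import Mathlib

noncomputable section

/-- `ω'` is the conjugate of the quadratic irrational `ω`: both are roots of the
minimal integer polynomial `A X^2 + B X + C` of `ω` (with `A > 0`, `gcd(A,B,C) = 1`),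
and `ω' ≠ ω`. -/
def IsConjPair (ω ω' : ℝ) : Prop :=
  Irrational ω ∧ ∃ A B C : ℤ, 0 < A ∧ Int.gcd (Int.gcd A B : ℤ) C = 1 ∧
    (A : ℝ) * ω ^ 2 + B * ω + C = 0 ∧ (A : ℝ) * ω' ^ 2 + B * ω' + C = 0 ∧ ω' ≠ ω

/-- The quadratic irrational `ω` has discriminant `Δ = B^2 - 4AC`, where
`A X^2 + B X + C` is its minimal integer polynomial (`A > 0`, `gcd(A,B,C) = 1`). -/
def HasDisc (ω : ℝ) (Δ : ℤ) : Prop :=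
  Irrational ω ∧ ∃ A B C : ℤ, 0 < A ∧ Int.gcd (Int.gcd A B : ℤ) C = 1 ∧
    (A : ℝ) * ω ^ 2 + B * ω + C = 0 ∧ Δ = B ^ 2 - 4 * A * C

/-- The matrix `M(a,e) = (a, e; 1, 0)`. -/
def Mmat (a e : ℤ) : Matrix (Fin 2) (Fin 2) ℤ := !![a, e; 1, 0]

/-- Möbius action of an integer matrix `(a, b; c, d)` on a real number:
`x ↦ (a x + b) / (c x + d)`. -/
def moebius (m : Matrix (Fin 2) (Fin 2) ℤ) (x : ℝ) : ℝ :=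
  ((m 0 0 : ℝ) * x + m 0 1) / ((m 1 0 : ℝ) * x + m 1 1)

/-- Membership in the Theta group `Θ̃`: an integer matrix with determinant `±1`
which is congruent to `I₂` or to `J₂ = (0,1;1,0)` mod 2. -/
def IsTheta (m : Matrix (Fin 2) (Fin 2) ℤ) : Prop :=
  (m.det = 1 ∨ m.det = -1) ∧
  (m.map (Int.cast : ℤ → ZMod 2) = 1 ∨ m.map (Int.cast : ℤ → ZMod 2) = !![0, 1; 1, 0])

/-- First ECF digit: `a₁(u) = 2⎣(u+1)/2⎦`. -/
def aE (u : ℝ) : ℤ := 2 * ⌊(u + 1) / 2⌋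

/-- Sign digit: `e₁(u) = sgn (u - a₁(u)) ∈ {±1}`. -/
def eE (u : ℝ) : ℤ := if (aE u : ℝ) < u then 1 else -1

/-- The ECF Gauss shift `T_E(u) = e₁(u) / (u - a₁(u))`. -/
def TE (u : ℝ) : ℝ := (eE u : ℝ) / (u - aE u)

/-- The least period of `ω` under `T_E` (junk value `0` if `ω` is not periodic). -/
def perE (ω : ℝ) : ℕ := sInf {n : ℕ | 0 < n ∧ TE^[n] ω = ω}

/-- `Ω_E(ω) = M(a₁,e₁) ⋯ M(aₙ,eₙ)`, where `n = per(ω)` and `(aᵢ, eᵢ)` are the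
ECF digits of `ω`. -/
def OmegaE (ω : ℝ) : Matrix (Fin 2) (Fin 2) ℤ :=
  ((List.range (perE ω)).map (fun i => Mmat (aE (TE^[i] ω)) (eE (TE^[i] ω)))).prod

/-!
Descent along the ECF expansion. Let `σ = (a, b; c, d) ∈ Θ̃` send `v > 1` to `w` with
`|d| < c`. Then `M(a₁(w), e₁(w))⁻¹ σ = (c, d; c', d')` is again in `Θ̃` and sends `v` to
`T_E w`, and `c' = c·e₁(w)(w - a₁(w)) ± 1/(cv + d)` lies strictly between `-1` and `c + 1`;
parity mod 2 and `det = ±1` then force `1 ≤ c' < c` and `|d'| < c'`. So `σ` is the product of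
the first `m ≥ 1` digit matrices of `w`, and `T_E^m w = v`. For `v = w = ω` the period divides
`m`, which makes `σ` a power of `Ω_E(ω)`; and since the bottom row of `M(a₁,e₁) ⋯ M(aₘ,eₘ)` is
`(q, eₘ q')` with `q' ≥ 0`, the sign of `d` is the last digit `eₙ`. The case `c = |d|` is
excluded because `c + d` is odd for a matrix in `Θ̃`.
-/

open Function

lemma eE_eq_one_or_neg_one (u : ℝ) : eE u = 1 ∨ eE u = -1 := by
  unfold eE; split <;> simp

lemma eE_ne_zero (u : ℝ) : eE u ≠ 0 := by
  rcases eE_eq_one_or_neg_one u with h | h <;> simp [h]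

lemma eE_mul_self (u : ℝ) : eE u * eE u = 1 := by
  rcases eE_eq_one_or_neg_one u with h | h <;> simp [h]

lemma abs_eE (u : ℝ) : |eE u| = 1 := by
  rcases eE_eq_one_or_neg_one u with h | h <;> simp [h]

lemma even_aE (u : ℝ) : Even (aE u) := even_two_mul _

lemma two_le_aE {u : ℝ} (hu : 1 ≤ u) : 2 ≤ aE u := by
  have : (1 : ℤ) ≤ ⌊(u + 1) / 2⌋ := by rw [Int.le_floor]; push_cast; linarith
  unfold aE; omega

lemma aE_eq_of_abs_sub_lt_one {u : ℝ} {a : ℤ} (ha : Even a) (h : |u - a| < 1) : aE u = a := by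
  obtain ⟨k, rfl⟩ := ha
  obtain ⟨h₁, h₂⟩ := abs_lt.mp h
  have : ⌊(u + 1) / 2⌋ = k := by
    rw [Int.floor_eq_iff]; push_cast at h₁ h₂ ⊢; constructor <;> linarith
  rw [aE, this, two_mul]

lemma eE_mul_sub_aE_mem {u : ℝ} (hu : Irrational u) :
    0 < eE u * (u - aE u) ∧ eE u * (u - aE u) < 1 := by
  -- `u - aE u ∈ [-1, 1)`, and irrationality rules out the values `-1` and `0`.
  have hlo := Int.floor_le ((u + 1) / 2)
  have hhi := Int.lt_floor_add_one ((u + 1) / 2)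
  have hne : u ≠ aE u := hu.ne_int _
  have hne' : u ≠ (aE u - 1 : ℤ) := hu.ne_int _
  simp only [aE, Int.cast_mul, Int.cast_ofNat, Int.cast_sub, Int.cast_one, eE] at *
  split_ifs with h <;> push_cast
  · constructor <;> linarith
  · constructor
    · linarith [lt_of_le_of_ne (not_lt.mp h) hne]
    · contrapose! hne'; linarith

lemma TE_eq_one_div (u : ℝ) : TE u = 1 / (eE u * (u - aE u)) := by
  rw [TE, one_div, mul_inv, ← div_eq_mul_inv]
  rcases eE_eq_one_or_neg_one u with h | h <;> simp [h]

lemma one_lt_TE {u : ℝ} (hu : Irrational u) : 1 < TE u := by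
  obtain ⟨h₀, h₁⟩ := eE_mul_sub_aE_mem hu
  rw [TE_eq_one_div, lt_div_iff₀ h₀]; linarith

lemma irrational_TE {u : ℝ} (hu : Irrational u) : Irrational (TE u) :=
  (hu.sub_intCast _).intCast_div (eE_ne_zero u)

lemma irrational_iterate_TE {u : ℝ} (hu : Irrational u) (n : ℕ) : Irrational (TE^[n] u) := by
  induction n with
  | zero => exact hu
  | succ n ih => rw [iterate_succ_apply']; exact irrational_TE ih

lemma one_lt_iterate_TE {u : ℝ} (hu : Irrational u) (h1 : 1 < u) (n : ℕ) : 1 < TE^[n] u := by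
  cases n with
  | zero => exact h1
  | succ n => rw [iterate_succ_apply']; exact one_lt_TE (irrational_iterate_TE hu n)

lemma ecf_digits_of_eq_add_div {a e : ℤ} {v w : ℝ} (ha : Even a) (he : e = 1 ∨ e = -1)
    (hv : 1 < v) (hw : w = a + e / v) : aE w = a ∧ eE w = e ∧ TE w = v := by
  have hv0 : 0 < v := by linarith
  have hsub : w - a = e / v := by rw [hw]; ring
  have haE : aE w = a := by
    refine aE_eq_of_abs_sub_lt_one ha ?_
    rw [hsub, abs_div, abs_of_pos hv0, div_lt_one hv0]
    rcases he with rfl | rfl <;> simpa using hv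
  have heE : eE w = e := by
    have hsign : (0 < w - a) ↔ e = 1 := by
      rcases he with rfl | rfl <;> simp [hsub, hv0]
    unfold eE; rw [haE]; split_ifs with h
    · exact (hsign.mp (sub_pos.mpr h)).symm
    · exact (he.resolve_left fun h' => h (sub_pos.mp (hsign.mpr h'))).symm
  refine ⟨haE, heE, ?_⟩
  rw [TE, haE, heE, hsub]
  rcases he with rfl | rfl <;> field_simp

lemma perE_eq_minimalPeriod (x : ℝ) : perE x = minimalPeriod TE x := by
  by_cases h : x ∈ periodicPts TE
  · obtain ⟨hpos, hper⟩ : 0 < perE x ∧ IsPeriodicPt TE (perE x) x := Nat.sInf_mem h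
    exact le_antisymm (Nat.sInf_le ⟨minimalPeriod_pos_of_mem_periodicPts h,
      isPeriodicPt_minimalPeriod TE x⟩) (hper.minimalPeriod_le hpos)
  · rw [minimalPeriod_eq_zero_of_notMem_periodicPts h, perE, Nat.sInf_eq_zero]
    exact Or.inr (Set.eq_empty_of_forall_notMem fun n ⟨hn, hx⟩ => h ⟨n, hn, hx⟩)

lemma moebius_mul (m n : Matrix (Fin 2) (Fin 2) ℤ) {x : ℝ} (hx : (n 1 0 : ℝ) * x + n 1 1 ≠ 0) :
    moebius (m * n) x = moebius m (moebius n x) := by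
  have hy : moebius n x * ((n 1 0 : ℝ) * x + n 1 1) = (n 0 0 : ℝ) * x + n 0 1 :=
    div_mul_cancel₀ _ hx
  set y := moebius n x
  clear_value y
  unfold moebius
  conv_rhs => rw [← mul_div_mul_right _ _ hx]
  simp only [Matrix.mul_apply, Fin.sum_univ_two, Int.cast_add, Int.cast_mul]
  congr 1
  · linear_combination (-(m 0 0 : ℝ)) * hy
  · linear_combination (-(m 1 0 : ℝ)) * hy

def MmatInv (a e : ℤ) : Matrix (Fin 2) (Fin 2) ℤ := !![0, 1; e, -(a * e)]

lemma Mmat_mul_MmatInv (a : ℤ) {e : ℤ} (he : e = 1 ∨ e = -1) : Mmat a e * MmatInv a e = 1 := by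
  rw [Mmat, MmatInv, Matrix.mul_fin_two, Matrix.one_fin_two]
  rcases he with rfl | rfl <;> simp

lemma MmatInv_mul (a e p q r s : ℤ) :
    MmatInv a e * !![p, q; r, s] = !![r, s; e * (p - a * r), e * (q - a * s)] := by
  rw [MmatInv, Matrix.mul_fin_two]
  ring_nf

lemma moebius_MmatInv (u : ℝ) : moebius (MmatInv (aE u) (eE u)) u = TE u := by
  simp only [moebius, MmatInv, TE, Matrix.of_apply, Matrix.cons_val', Matrix.cons_val_zero,
    Matrix.cons_val_one, Matrix.cons_val_fin_one, Matrix.empty_val', Int.cast_neg, Int.cast_mul,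
    Int.cast_zero, Int.cast_one, zero_mul, zero_add]
  rcases eE_eq_one_or_neg_one u with h | h <;> rw [h] <;> push_cast
  · ring
  · rw [← neg_div_neg_eq]; ring_nf

lemma IsTheta.det_eq {p q r s : ℤ} (h : IsTheta !![p, q; r, s]) :
    p * s - q * r = 1 ∨ p * s - q * r = -1 := by
  rw [← Matrix.det_fin_two_of]; exact h.1

lemma IsTheta.mul {m n : Matrix (Fin 2) (Fin 2) ℤ} (hm : IsTheta m) (hn : IsTheta n) :
    IsTheta (m * n) := by
  refine ⟨?_, ?_⟩
  · rw [Matrix.det_mul]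
    rcases hm.1 with h | h <;> rcases hn.1 with h' | h' <;> simp [h, h']
  · have hmap : (m * n).map (Int.cast : ℤ → ZMod 2) = m.map Int.cast * n.map Int.cast :=
      Matrix.map_mul (f := Int.castRingHom (ZMod 2))
    rw [hmap]
    rcases hm.2 with h | h <;> rcases hn.2 with h' | h' <;> rw [h, h'] <;> simp [Matrix.one_fin_two]

lemma isTheta_MmatInv {a e : ℤ} (ha : Even a) (he : e = 1 ∨ e = -1) : IsTheta (MmatInv a e) := by
  have ha2 : (a : ZMod 2) = 0 := ZMod.intCast_eq_zero_iff_even.mpr ha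
  refine ⟨by rcases he with rfl | rfl <;> simp [MmatInv, Matrix.det_fin_two], Or.inr ?_⟩
  ext i j
  fin_cases i <;> fin_cases j <;> rcases he with rfl | rfl <;> simp [MmatInv, ha2]

lemma IsTheta.odd_add {p q r s : ℤ} (h : IsTheta !![p, q; r, s]) : Odd (p + r) ∧ Odd (r + s) := by
  simp only [← ZMod.intCast_eq_one_iff_odd, Int.cast_add]
  rcases h.2 with h | h <;>
  · have entry (i j : Fin 2) := congrFun (congrFun h i) j
    simp only [Matrix.map_apply, Matrix.of_apply, Matrix.one_apply] at entry
    have := entry 0 0; have := entry 1 0; have := entry 1 1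
    simp_all

def convMat (w : ℝ) (m : ℕ) : Matrix (Fin 2) (Fin 2) ℤ :=
  ((List.range m).map (fun i => Mmat (aE (TE^[i] w)) (eE (TE^[i] w)))).prod

lemma convMat_zero (w : ℝ) : convMat w 0 = 1 := rfl

lemma convMat_one (w : ℝ) : convMat w 1 = Mmat (aE w) (eE w) := by
  simp [convMat]

lemma convMat_add (w : ℝ) (m n : ℕ) :
    convMat w (m + n) = convMat w m * convMat (TE^[m] w) n := by
  simp only [convMat, List.range_add, List.map_append, List.prod_append, List.map_map]
  congr 3
  funext i
  simp only [comp_apply, ← iterate_add_apply, Nat.add_comm i m]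

lemma convMat_mul_eq_pow {w : ℝ} {n : ℕ} (hw : IsPeriodicPt TE n w) (k : ℕ) :
    convMat w (n * k) = convMat w n ^ k := by
  induction k with
  | zero => rfl
  | succ k ih => rw [Nat.mul_succ, convMat_add, ih, (hw.mul_const k).eq, pow_succ]

lemma convMat_succ_bottom_row (w : ℝ) (m : ℕ) :
    convMat w (m + 1) 1 0 = convMat w m 1 0 * aE (TE^[m] w) + convMat w m 1 1 ∧
    convMat w (m + 1) 1 1 = convMat w m 1 0 * eE (TE^[m] w) := by
  simp [convMat_add, convMat_one, Mmat, Matrix.mul_apply, Fin.sum_univ_two]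

lemma abs_convMat_succ_one_one_lt {w : ℝ} (hw : Irrational w) (h1 : 1 < w) (m : ℕ) :
    |convMat w (m + 1) 1 1| < convMat w (m + 1) 1 0 := by
  induction m with
  | zero => simp [convMat_one, Mmat]
  | succ m ih =>
    obtain ⟨h10, h11⟩ := convMat_succ_bottom_row w (m + 1)
    have ha : 2 ≤ aE (TE^[m + 1] w) := two_le_aE (one_lt_iterate_TE hw h1 _).le
    have hq : 0 ≤ convMat w (m + 1) 1 0 := (abs_nonneg _).trans ih.le
    rw [h10, h11, abs_mul, abs_eE, mul_one, abs_of_nonneg hq]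
    nlinarith [neg_abs_le (convMat w (m + 1) 1 1), mul_le_mul_of_nonneg_left ha hq]

lemma eE_mul_convMat_succ_one_one_nonneg {w : ℝ} (hw : Irrational w) (h1 : 1 < w) (m : ℕ) :
    0 ≤ eE (TE^[m] w) * convMat w (m + 1) 1 1 := by
  have hq : 0 ≤ convMat w m 1 0 := by
    cases m with
    | zero => simp [convMat_zero]
    | succ m => exact (abs_nonneg _).trans (abs_convMat_succ_one_one_lt hw h1 m).le
  rw [(convMat_succ_bottom_row w m).2]
  nlinarith [eE_mul_self (TE^[m] w)]

lemma ne_abs_of_odd_add {x y : ℤ} (h : Odd (x + y)) : x ≠ |y| := by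
  rw [Int.odd_iff] at h
  rcases abs_choice y with hy | hy <;> rw [hy] <;> omega

lemma one_lt_moebius_denom {c d : ℤ} {v : ℝ} (hv : 1 < v) (hc : 1 ≤ c) (hdc : |d| < c) :
    1 < (c : ℝ) * v + d := by
  have hc' : (1 : ℝ) ≤ c := by exact_mod_cast hc
  have hd : (1 : ℝ) - c ≤ d := by
    have := neg_abs_le d; exact_mod_cast (by omega : 1 - c ≤ d)
  nlinarith

lemma IsTheta.bottom_row_lt {c d c' d' : ℤ} (hθ : IsTheta !![c, d; c', d']) (hc : 2 ≤ c)
    (hdc : |d| < c) (hc'0 : 0 ≤ c') (hc'c : c' ≤ c) : 1 ≤ c' ∧ c' < c ∧ |d'| < c' := by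
  have hdet := hθ.det_eq
  obtain ⟨hodd₁, hodd₂⟩ := hθ.odd_add
  have hc'ne0 : c' ≠ 0 := by
    rintro rfl
    have : IsUnit c := by
      rcases hdet with h | h
      · exact IsUnit.of_mul_eq_one d' (by linarith)
      · exact IsUnit.of_mul_eq_one (-d') (by linarith)
    rcases Int.isUnit_iff.mp this with h | h <;> omega
  have hc'ne : c' ≠ c := by rw [Int.odd_iff] at hodd₁; omega
  refine ⟨by omega, by omega, ?_⟩
  by_contra! hle
  have hlt : c' + 1 ≤ |d'| := lt_of_le_of_ne hle (ne_abs_of_odd_add hodd₂)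
  have h₁ : |d * c'| ≤ (c - 1) * c' := by
    rw [abs_mul, abs_of_nonneg hc'0]; exact mul_le_mul_of_nonneg_right (by omega) hc'0
  have h₂ : c * (c' + 1) ≤ |c * d'| := by
    rw [abs_mul, abs_of_nonneg (by omega : (0 : ℤ) ≤ c)]
    exact mul_le_mul_of_nonneg_left hlt (by omega)
  have h₃ : |c * d'| - |d * c'| ≤ |c * d' - d * c'| := abs_sub_abs_le_abs_sub _ _
  have h₄ : |c * d' - d * c'| = 1 := by rcases hdet with h | h <;> simp [h]
  linarith

lemma MmatInv_mul_bottom_left_bounds {a b c d : ℤ} {v w : ℝ} (hv : 1 < v) (hw : Irrational w)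
    (hdet : a * d - b * c = 1 ∨ a * d - b * c = -1) (hc : 1 ≤ c) (hdc : |d| < c)
    (hvw : moebius !![a, b; c, d] v = w) :
    -1 < eE w * (a - aE w * c) ∧ eE w * (a - aE w * c) < c + 1 := by
  set D : ℝ := c * v + d
  have hD : 1 < D := one_lt_moebius_denom hv hc hdc
  have hvw' : (a : ℝ) * v + b = w * D := by
    rw [moebius, div_eq_iff (by positivity)] at hvw; simpa using hvw
  set E : ℝ := eE w * (w - aE w)
  set t : ℝ := eE w * (a * d - b * c)
  obtain ⟨hE₀, hE₁⟩ := eE_mul_sub_aE_mem hw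
  have ht : |t| = 1 := by
    rw [abs_mul]; norm_cast; rw [abs_eE]; rcases hdet with h | h <;> simp [h]
  have hformula : ((eE w * (a - aE w * c) : ℤ) : ℝ) = c * E + t / D := by
    field_simp
    push_cast
    linear_combination (eE w * c : ℝ) * hvw'
  have htD : |t / D| < 1 := by
    rw [abs_div, ht, abs_of_pos (by linarith), div_lt_one (by linarith)]; exact hD
  have hc' : (1 : ℝ) ≤ c := by exact_mod_cast hc
  obtain ⟨h₁, h₂⟩ := abs_lt.mp htD
  constructor
  · have : (-1 : ℝ) < ((eE w * (a - aE w * c) : ℤ) : ℝ) := by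
      rw [hformula]; nlinarith
    exact_mod_cast this
  · have : ((eE w * (a - aE w * c) : ℤ) : ℝ) < c + 1 := by
      rw [hformula]; nlinarith
    exact_mod_cast this

lemma exists_MmatInv_mul_eq {a b c d : ℤ} {v w : ℝ} (hv : 1 < v) (hw : Irrational w)
    (hθ : IsTheta !![a, b; c, d]) (hc : 2 ≤ c) (hdc : |d| < c)
    (hvw : moebius !![a, b; c, d] v = w) :
    ∃ c' d' : ℤ, MmatInv (aE w) (eE w) * !![a, b; c, d] = !![c, d; c', d'] ∧
      IsTheta !![c, d; c', d'] ∧ 1 ≤ c' ∧ c' < c ∧ |d'| < c' := by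
  refine ⟨_, _, MmatInv_mul _ _ _ _ _ _, ?_⟩
  have hτ : IsTheta !![c, d; eE w * (a - aE w * c), eE w * (b - aE w * d)] := by
    rw [← MmatInv_mul]
    exact (isTheta_MmatInv (even_aE w) (eE_eq_one_or_neg_one w)).mul hθ
  obtain ⟨hlo, hhi⟩ := MmatInv_mul_bottom_left_bounds hv hw hθ.det_eq (by omega) hdc hvw
  exact ⟨hτ, hτ.bottom_row_lt hc hdc (by omega) (by omega)⟩

lemma IsTheta.entries_of_bottom_left_eq_one {a b d : ℤ} (hθ : IsTheta !![a, b; 1, d])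
    (hd : |d| < 1) : d = 0 ∧ Even a ∧ (b = 1 ∨ b = -1) := by
  have hd0 : d = 0 := Int.abs_lt_one_iff.mp hd
  subst hd0
  refine ⟨rfl, ?_, ?_⟩
  · have := hθ.odd_add.1
    rw [Int.odd_add'] at this
    simpa using this
  · rcases hθ.det_eq with h | h <;> [right; left] <;> linarith

theorem exists_eq_convMat_of_moebius_eq {a b c d : ℤ} {v w : ℝ} (hv : 1 < v) (hw : Irrational w)
    (hθ : IsTheta !![a, b; c, d]) (hc : 1 ≤ c) (hdc : |d| < c)
    (hvw : moebius !![a, b; c, d] v = w) :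
    ∃ m, 0 < m ∧ !![a, b; c, d] = convMat w m ∧ TE^[m] w = v := by
  lift c to ℕ using (by omega)
  induction c using Nat.strong_induction_on generalizing a b d w with
  | _ c ih =>
    rcases (show c = 1 ∨ 2 ≤ c by omega) with rfl | hc2
    · obtain ⟨rfl, ha, hb⟩ := IsTheta.entries_of_bottom_left_eq_one hθ hdc
      have hwv : w = a + b / v := by
        have hv0 : v ≠ 0 := by positivity
        rw [← hvw]; simp [moebius]; field_simp
      obtain ⟨haE, heE, hTE⟩ := ecf_digits_of_eq_add_div ha hb hv hwv
      exact ⟨1, one_pos, by simp [convMat_one, haE, heE, Mmat], hTE⟩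
    · obtain ⟨c', d', hτ, hθ', hc'1, hc'c, hd'c'⟩ :=
        exists_MmatInv_mul_eq hv hw hθ (by exact_mod_cast hc2) hdc hvw
      have hD : (c : ℝ) * v + d ≠ 0 := (zero_lt_one.trans (one_lt_moebius_denom hv hc hdc)).ne'
      have hτv : moebius !![c, d; c', d'] v = TE w := by
        rw [← hτ, moebius_mul _ _ (by simpa using hD), hvw, moebius_MmatInv]
      lift c' to ℕ using (by omega)
      obtain ⟨m, hm, hτm, hTm⟩ :=
        ih c' (by exact_mod_cast hc'c) (irrational_TE hw) hθ' hc'1 hd'c' hτv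
      refine ⟨m + 1, m.succ_pos, ?_, by rwa [iterate_succ_apply]⟩
      rw [Nat.add_comm, convMat_add, convMat_one, iterate_one, ← hτm, ← hτ, ← mul_assoc,
        Mmat_mul_MmatInv _ (eE_eq_one_or_neg_one w), one_mul]

lemma exists_eq_OmegaE_pow_of_moebius_eq {a b c d : ℤ} {ω : ℝ} (hω : 1 < ω) (hirr : Irrational ω)
    (hθ : IsTheta !![a, b; c, d]) (hfix : moebius !![a, b; c, d] ω = ω) (hd : d ≠ 0)
    (hdc : |d| ≤ c) :
    0 < eE (TE^[perE ω - 1] ω) * d ∧ ∃ k ≥ 1, !![a, b; c, d] = OmegaE ω ^ k := by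
  have hdc' : |d| < c := lt_of_le_of_ne hdc (ne_abs_of_odd_add hθ.odd_add.2).symm
  obtain ⟨m, hm, hσ, hper⟩ := exists_eq_convMat_of_moebius_eq hω hirr hθ
    (by have := abs_nonneg d; omega) hdc' hfix
  have hP : IsPeriodicPt TE m ω := hper
  obtain ⟨k, hk⟩ := hP.minimalPeriod_dvd
  have hn := hP.minimalPeriod_pos hm
  rw [OmegaE, perE_eq_minimalPeriod]
  set n := minimalPeriod TE ω
  obtain ⟨j, rfl⟩ : ∃ j, k = j + 1 := Nat.exists_eq_succ_of_ne_zero (by rintro rfl; omega)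
  obtain ⟨i, rfl⟩ : ∃ i, m = i + 1 := Nat.exists_eq_succ_of_ne_zero hm.ne'
  have hlast : TE^[n - 1] ω = TE^[i] ω := by
    rw [show i = n - 1 + n * j by rw [Nat.mul_succ] at hk; omega, iterate_add_apply,
      ((isPeriodicPt_minimalPeriod TE ω).mul_const j).eq]
  refine ⟨?_, j + 1, by omega, ?_⟩
  · have hnonneg := eE_mul_convMat_succ_one_one_nonneg hirr hω i
    rw [← hσ] at hnonneg
    rw [hlast]
    exact lt_of_le_of_ne (by simpa using hnonneg) (mul_ne_zero (eE_ne_zero _) hd).symm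
  · rw [hσ, hk, convMat_mul_eq_pow (isPeriodicPt_minimalPeriod TE ω)]
    rfl

theorem stmt14_general (ω ωs : ℝ) (hω : 1 < ω) (hconj : IsConjPair ω ωs)
    (a b c d : ℤ) (hθ : IsTheta !![a, b; c, d])
    (hfix : moebius !![a, b; c, d] ω = ω) :
    (1 ≤ d → d ≤ c →
      eE (TE^[perE ω - 1] ω) = 1 ∧ ∃ k ≥ 1, !![a, b; c, d] = OmegaE ω ^ k) ∧
    (1 ≤ -d → -d ≤ c →
      eE (TE^[perE ω - 1] ω) = -1 ∧ ∃ k ≥ 1, !![a, b; c, d] = OmegaE ω ^ k) := by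
  have hsign := eE_eq_one_or_neg_one (TE^[perE ω - 1] ω)
  constructor
  · intro hd hdc
    obtain ⟨hpos, hpow⟩ := exists_eq_OmegaE_pow_of_moebius_eq hω hconj.1 hθ hfix (by omega)
      (by rwa [abs_of_pos (by omega)])
    exact ⟨hsign.resolve_right fun h => by rw [h] at hpos; omega, hpow⟩
  · intro hd hdc
    obtain ⟨hpos, hpow⟩ := exists_eq_OmegaE_pow_of_moebius_eq hω hconj.1 hθ hfix (by omega)
      (by rwa [abs_of_neg (by omega)])
    exact ⟨hsign.resolve_left fun h => by rw [h] at hpos; omega, hpow⟩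

theorem stmt14 (ω ωs : ℝ) (hω : 1 < ω) (hconj : IsConjPair ω ωs)
    (hred : -1 < ωs ∧ ωs < 1)
    (a b c d : ℤ) (hθ : IsTheta !![a, b; c, d])
    (hfix : moebius !![a, b; c, d] ω = ω) :
    (1 ≤ d → d ≤ c →
      eE (TE^[perE ω - 1] ω) = 1 ∧ ∃ k ≥ 1, !![a, b; c, d] = OmegaE ω ^ k) ∧
    (1 ≤ -d → -d ≤ c →
      eE (TE^[perE ω - 1] ω) = -1 ∧ ∃ k ≥ 1, !![a, b; c, d] = OmegaE ω ^ k) :=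
  stmt14_general ω ωs hω hconj a b c d hθ hfix
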